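/- arXiv:1909.03910 — 2 statements merged into one kernel-verified Lean document; each statement's English description precedes it below -/
import Mathlib

section
/- In the Artin braid group B_n with a_{i,j} = σ_{j-1}⋯σ_i, for all indices with i < k < l ≤ j one has a_{i,j}a_{k,l} = a_{k-1,l-1}a_{i,j}. -/
/-- `a_{i,j} = σ_{j-1} σ_{j-2} ⋯ σ_i`. -/
def aWord {G : Type*} [Group G] (σ : ℕ → G) (i j : ℕ) : G :=
  ((List.range (j - i)).map (fun t => σ (j - 1 - t))).prod

/-!
Write `a_{i,j} = a_{t+2,j} σ_{t+1} σ_t a_{i,t}` for `i ≤ t < t + 2 ≤ j`. Far commutation moves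
`σ_{t+1}` past `a_{i,t}` and `σ_t` past `a_{t+2,j}`, and the braid relation turns
`σ_{t+1} σ_t σ_{t+1}` into `σ_t σ_{t+1} σ_t`; hence `a_{i,j} σ_{t+1} = σ_t a_{i,j}`.
Peeling the generators of `a_{k+1,l+1}` off one at a time gives the theorem.
-/

section

variable {G : Type*} [Group G] (σ : ℕ → G)

theorem aWord_self (i : ℕ) : aWord σ i i = 1 := by
  simp [aWord]

theorem aWord_succ_right {i j : ℕ} (hij : i ≤ j) : aWord σ i (j + 1) = σ j * aWord σ i j := by
  rw [aWord, show j + 1 - i = j - i + 1 by omega, List.range_succ_eq_map, List.map_cons,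
    List.prod_cons, List.map_map, aWord]
  congr 2
  exact List.map_congr_left fun t _ => congrArg σ (by omega)

theorem aWord_mul_aWord {i m j : ℕ} (him : i ≤ m) (hmj : m ≤ j) :
    aWord σ m j * aWord σ i m = aWord σ i j := by
  induction j, hmj using Nat.le_induction with
  | base => rw [aWord_self, one_mul]
  | succ j hmj ih => rw [aWord_succ_right σ hmj, aWord_succ_right σ (him.trans hmj), mul_assoc, ih]

theorem Commute.aWord_right {g : G} {i j : ℕ} (h : ∀ t, i ≤ t → t < j → Commute g (σ t)) :
    Commute g (aWord σ i j) :=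
  Commute.list_prod_right _ _ fun x hx => by
    obtain ⟨t, ht, rfl⟩ := List.mem_map.mp hx
    have := List.mem_range.mp ht
    exact h _ (by omega) (by omega)

theorem aWord_mul_generator {i j : ℕ}
    (hcomm : ∀ a b, i ≤ a → a + 1 < b → b < j → Commute (σ a) (σ b))
    (hbraid : ∀ a, i ≤ a → a + 2 ≤ j → σ a * σ (a + 1) * σ a = σ (a + 1) * σ a * σ (a + 1))
    {t : ℕ} (hit : i ≤ t) (htj : t + 2 ≤ j) :
    aWord σ i j * σ (t + 1) = σ t * aWord σ i j := by
  have hsplit : aWord σ i j = aWord σ (t + 2) j * (σ (t + 1) * (σ t * aWord σ i t)) := by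
    rw [← aWord_mul_aWord σ (show i ≤ t + 2 by omega) htj, aWord_succ_right σ (by omega),
      aWord_succ_right σ hit]
  have hlow : Commute (σ (t + 1)) (aWord σ i t) :=
    Commute.aWord_right σ fun s hs hst => (hcomm s (t + 1) hs (by omega) (by omega)).symm
  have hhigh : Commute (σ t) (aWord σ (t + 2) j) :=
    Commute.aWord_right σ fun s hs hsj => hcomm t s hit (by omega) hsj
  calc aWord σ i j * σ (t + 1)
      = aWord σ (t + 2) j * (σ (t + 1) * σ t * σ (t + 1)) * aWord σ i t := by
        rw [hsplit, mul_assoc, mul_assoc, mul_assoc, ← hlow.eq]; group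
    _ = σ t * (aWord σ (t + 2) j * (σ (t + 1) * (σ t * aWord σ i t))) := by
        rw [← hbraid t hit htj]
        simp only [← mul_assoc]
        rw [hhigh.eq]
    _ = σ t * aWord σ i j := by rw [hsplit]

theorem aWord_mul_aWord_succ_succ {i j : ℕ}
    (hcomm : ∀ a b, i ≤ a → a + 1 < b → b < j → Commute (σ a) (σ b))
    (hbraid : ∀ a, i ≤ a → a + 2 ≤ j → σ a * σ (a + 1) * σ a = σ (a + 1) * σ a * σ (a + 1))
    {k l : ℕ} (hik : i ≤ k) (hkl : k ≤ l) (hlj : l < j) :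
    aWord σ i j * aWord σ (k + 1) (l + 1) = aWord σ k l * aWord σ i j := by
  induction l, hkl using Nat.le_induction with
  | base => rw [aWord_self, aWord_self, mul_one, one_mul]
  | succ l hkl ih =>
    rw [aWord_succ_right σ (by omega), aWord_succ_right σ hkl, ← mul_assoc,
      aWord_mul_generator σ hcomm hbraid (by omega) (by omega), mul_assoc, ih (by omega),
      mul_assoc]

end

/-- In the Artin braid group `B_n`, with `a_{i,j} = σ_{j-1} ⋯ σ_i`, one has
`a_{i,j} a_{k,l} = a_{k-1,l-1} a_{i,j}` for all `i < k < l ≤ j`. -/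
theorem stmt_2 {G : Type*} [Group G] (n : ℕ) (σ : ℕ → G)
    (hcomm : ∀ i j : ℕ, 1 ≤ i → i + 1 < j → j ≤ n - 1 → σ i * σ j = σ j * σ i)
    (hbraid : ∀ i : ℕ, 1 ≤ i → i + 1 ≤ n - 1 →
      σ i * σ (i + 1) * σ i = σ (i + 1) * σ i * σ (i + 1))
    (i k l j : ℕ) (h1 : 1 ≤ i) (hik : i < k) (hkl : k < l) (hlj : l ≤ j) (hjn : j ≤ n) :
    aWord σ i j * aWord σ k l = aWord σ (k - 1) (l - 1) * aWord σ i j := by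
  obtain ⟨k, rfl⟩ : ∃ k', k = k' + 1 := ⟨k - 1, by omega⟩
  obtain ⟨l, rfl⟩ : ∃ l', l = l' + 1 := ⟨l - 1, by omega⟩
  simp only [Nat.add_sub_cancel]
  exact aWord_mul_aWord_succ_succ σ
    (fun a b ha hab hb => hcomm a b (by omega) hab (by omega))
    (fun a ha haj => hbraid a (by omega) (by omega)) (by omega) (by omega) (by omega)
end

section
/- Let Γ be a simple graph on {1,…,n} containing no 3-cycle, and let P(Γ) be the abelian group with one generator s_{i,j} for each edge {i,j} of Γ and no further relations (the quotient of the pure braid group P_n by the normal closure of the generators s_{i,j} with {i,j} ∉ E(Γ)). Then P(Γ) is a free abelian group of rank |E(Γ)|. -/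
/-!
Any two generators of `P(Γ)` commute. If `s_{i,j}` and `s_{k,l}` share an endpoint, the three
vertices involved do not form a triangle, so one of the three generators they span is trivial and
relation (2) makes the other two commute. Disjoint or nested pairs commute by (1); an interleaved
pair `i < k < j < l` commutes by (3), because `s_{k,j}` and `s_{k,l}` commute and so the conjugate
`s_{k,j} s_{k,l} s_{k,j}⁻¹` is just `s_{k,l}`. Hence `P(Γ)` is abelian, and since all Markoff
relators die in abelian groups, `P(Γ)` is presented as an abelian group by the edge generators
alone.
-/

/-- Generators of the pure braid group: pairs `(i, j)` with `i < j`. -/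
def PBGen (n : ℕ) := {p : Fin n × Fin n // p.1 < p.2}

/-- The free-group generator `s_{i,j}` for `i < j`. -/
def sg {n : ℕ} (i j : Fin n) (h : i < j) : FreeGroup (PBGen n) :=
  FreeGroup.of ⟨(i, j), h⟩

/-- Markoff's (Burau) relators for the pure braid group `P_n`:
(1) `s_{i,j} s_{k,l} = s_{k,l} s_{i,j}` for `i<j<k<l` and for `i<k<l<j`;
(2) `s_{i,j} s_{i,k} s_{j,k} = s_{i,k} s_{j,k} s_{i,j} = s_{j,k} s_{i,j} s_{i,k}` for `i<j<k`;
(3) `s_{i,k} s_{j,k} s_{j,l} s_{j,k}⁻¹ = s_{j,k} s_{j,l} s_{j,k}⁻¹ s_{i,k}` for `i<j<k<l`. -/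
def markoffRels (n : ℕ) : Set (FreeGroup (PBGen n)) :=
  {r | ∃ (i j k l : Fin n) (hij : i < j) (_ : j < k) (hkl : k < l),
      r = sg i j hij * sg k l hkl * (sg i j hij)⁻¹ * (sg k l hkl)⁻¹} ∪
  {r | ∃ (i k l j : Fin n) (hik : i < k) (hkl : k < l) (hlj : l < j),
      r = sg i j (hik.trans (hkl.trans hlj)) * sg k l hkl *
        (sg i j (hik.trans (hkl.trans hlj)))⁻¹ * (sg k l hkl)⁻¹} ∪
  {r | ∃ (i j k : Fin n) (hij : i < j) (hjk : j < k),
      r = sg i j hij * sg i k (hij.trans hjk) * sg j k hjk *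
        (sg i k (hij.trans hjk) * sg j k hjk * sg i j hij)⁻¹} ∪
  {r | ∃ (i j k : Fin n) (hij : i < j) (hjk : j < k),
      r = sg i j hij * sg i k (hij.trans hjk) * sg j k hjk *
        (sg j k hjk * sg i j hij * sg i k (hij.trans hjk))⁻¹} ∪
  {r | ∃ (i j k l : Fin n) (hij : i < j) (hjk : j < k) (hkl : k < l),
      r = sg i k (hij.trans hjk) * sg j k hjk * sg j l (hjk.trans hkl) * (sg j k hjk)⁻¹ *
        (sg j k hjk * sg j l (hjk.trans hkl) * (sg j k hjk)⁻¹ * sg i k (hij.trans hjk))⁻¹}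

/-- `P(Γ)`: the quotient of the pure braid group `P_n` (with Markoff's presentation) by
the normal closure of the generators `s_{i,j}` with `{i,j} ∉ E(Γ)`. -/
abbrev chromPure {n : ℕ} (Γ : SimpleGraph (Fin n)) :=
  PresentedGroup (markoffRels n ∪ {r | ∃ (i j : Fin n) (h : i < j), ¬ Γ.Adj i j ∧ r = sg i j h})

theorem PresentedGroup.mul_comm_of_commute_of {α : Type*} {rels : Set (FreeGroup α)}
    (h : ∀ x y : α, Commute (PresentedGroup.of x : PresentedGroup rels) (PresentedGroup.of y))
    (a b : PresentedGroup rels) : a * b = b * a := by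
  have hgen := Subgroup.closure_le_centralizer_centralizer
    (Set.range (PresentedGroup.of : α → PresentedGroup rels))
  rw [PresentedGroup.closure_range_of] at hgen
  exact Set.centralizer_centralizer_comm_of_comm (by rintro _ ⟨x, rfl⟩ _ ⟨y, rfl⟩; exact h x y)
    a (hgen trivial) b (hgen trivial)

theorem SimpleGraph.inf_lt_sup_of_mem_edgeSet {V : Type*} [LinearOrder V] {G : SimpleGraph V}
    {e : Sym2 V} (he : e ∈ G.edgeSet) : e.inf < e.sup := by
  induction e using Sym2.ind with
  | _ a b => exact min_lt_max.mpr (G.mem_edgeSet.mp he).ne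

theorem lift_eq_one_of_mem_markoffRels {n : ℕ} {M : Type*} [CommGroup M] (f : PBGen n → M)
    {r : FreeGroup (PBGen n)} (hr : r ∈ markoffRels n) : FreeGroup.lift f r = 1 := by
  rcases hr with ((((⟨i, j, k, l, hij, hjk, hkl, rfl⟩ | ⟨i, k, l, j, hik, hkl, hlj, rfl⟩) |
      ⟨i, j, k, hij, hjk, rfl⟩) | ⟨i, j, k, hij, hjk, rfl⟩) | ⟨i, j, k, l, hij, hjk, hkl, rfl⟩) <;>
    simp only [sg, map_mul, map_inv, mul_inv_eq_one] <;>
    simp [mul_comm, mul_left_comm, mul_assoc]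

namespace chromPure

variable {n : ℕ} {Γ : SimpleGraph (Fin n)}

variable (Γ) in
abbrev gen (i j : Fin n) (h : i < j) : chromPure Γ := PresentedGroup.of ⟨(i, j), h⟩

theorem gen_congr {i j i' j' : Fin n} (h : i < j) (h' : i' < j') (hi : i = i') (hj : j = j') :
    gen Γ i j h = gen Γ i' j' h' := by
  subst hi hj; rfl

theorem gen_eq_one_of_not_adj {i j : Fin n} (h : i < j) (hna : ¬Γ.Adj i j) : gen Γ i j h = 1 :=
  PresentedGroup.one_of_mem (Or.inr ⟨i, j, h, hna, rfl⟩)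

theorem mk_eq_one_of_mem_markoffRels {r : FreeGroup (PBGen n)} (hr : r ∈ markoffRels n) :
    PresentedGroup.mk _ r = (1 : chromPure Γ) :=
  PresentedGroup.one_of_mem (Or.inl hr)

section MarkoffRelations

variable {i j k l : Fin n}

theorem commute_gen_of_lt_of_lt (hij : i < j) (hjk : j < k) (hkl : k < l) :
    Commute (gen Γ i j hij) (gen Γ k l hkl) := by
  have h := mk_eq_one_of_mem_markoffRels (Γ := Γ)
    (Or.inl (Or.inl (Or.inl (Or.inl ⟨i, j, k, l, hij, hjk, hkl, rfl⟩))))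
  simp only [map_mul, map_inv] at h
  exact commutatorElement_eq_one_iff_commute.mp h

theorem commute_gen_of_nested (hik : i < k) (hkl : k < l) (hlj : l < j) :
    Commute (gen Γ i j (hik.trans (hkl.trans hlj))) (gen Γ k l hkl) := by
  have h := mk_eq_one_of_mem_markoffRels (Γ := Γ)
    (Or.inl (Or.inl (Or.inl (Or.inr ⟨i, k, l, j, hik, hkl, hlj, rfl⟩))))
  simp only [map_mul, map_inv] at h
  exact commutatorElement_eq_one_iff_commute.mp h

theorem gen_triple_rotate_left (hij : i < j) (hjk : j < k) :
    gen Γ i j hij * gen Γ i k (hij.trans hjk) * gen Γ j k hjk =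
      gen Γ i k (hij.trans hjk) * gen Γ j k hjk * gen Γ i j hij := by
  have h := mk_eq_one_of_mem_markoffRels (Γ := Γ)
    (Or.inl (Or.inl (Or.inr ⟨i, j, k, hij, hjk, rfl⟩)))
  simp only [map_mul, map_inv] at h
  exact mul_inv_eq_one.mp h

theorem gen_triple_rotate_right (hij : i < j) (hjk : j < k) :
    gen Γ i j hij * gen Γ i k (hij.trans hjk) * gen Γ j k hjk =
      gen Γ j k hjk * gen Γ i j hij * gen Γ i k (hij.trans hjk) := by
  have h := mk_eq_one_of_mem_markoffRels (Γ := Γ)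
    (Or.inl (Or.inr ⟨i, j, k, hij, hjk, rfl⟩))
  simp only [map_mul, map_inv] at h
  exact mul_inv_eq_one.mp h

theorem commute_gen_conj (hij : i < j) (hjk : j < k) (hkl : k < l) :
    Commute (gen Γ i k (hij.trans hjk))
      (gen Γ j k hjk * gen Γ j l (hjk.trans hkl) * (gen Γ j k hjk)⁻¹) := by
  have h := mk_eq_one_of_mem_markoffRels (Γ := Γ) (Or.inr ⟨i, j, k, l, hij, hjk, hkl, rfl⟩)
  simp only [map_mul, map_inv, mul_assoc] at h
  exact mul_inv_eq_one.mp h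

end MarkoffRelations

theorem commute_gens_of_not_triangle {i j k : Fin n} (hij : i < j) (hjk : j < k)
    (hnt : ¬(Γ.Adj i j ∧ Γ.Adj j k ∧ Γ.Adj i k)) :
    Commute (gen Γ i j hij) (gen Γ i k (hij.trans hjk)) ∧
      Commute (gen Γ i j hij) (gen Γ j k hjk) ∧
      Commute (gen Γ i k (hij.trans hjk)) (gen Γ j k hjk) := by
  have hrot := gen_triple_rotate_left (Γ := Γ) hij hjk
  by_cases hadj_ij : Γ.Adj i j
  · by_cases hadj_jk : Γ.Adj j k
    · rw [gen_eq_one_of_not_adj _ fun hadj_ik => hnt ⟨hadj_ij, hadj_jk, hadj_ik⟩] at hrot ⊢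
      rw [mul_one, one_mul] at hrot
      exact ⟨.one_right _, hrot, .one_left _⟩
    · rw [gen_eq_one_of_not_adj hjk hadj_jk, mul_one, mul_one] at hrot
      rw [gen_eq_one_of_not_adj hjk hadj_jk]
      exact ⟨hrot, .one_right _, .one_right _⟩
  · have hrot' := hrot.symm.trans (gen_triple_rotate_right hij hjk)
    rw [gen_eq_one_of_not_adj hij hadj_ij, mul_one, mul_one] at hrot'
    rw [gen_eq_one_of_not_adj hij hadj_ij]
    exact ⟨.one_left _, .one_left _, hrot'⟩

open Classical in
variable (Γ) in
noncomputable def edgeOrOne (x : PBGen n) : Multiplicative (FreeAbelianGroup Γ.edgeSet) :=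
  if h : Γ.Adj x.1.1 x.1.2 then .ofAdd (.of ⟨s(x.1.1, x.1.2), Γ.mem_edgeSet.mpr h⟩) else 1

variable (Γ) in
noncomputable def toFreeAbelian : chromPure Γ →* Multiplicative (FreeAbelianGroup Γ.edgeSet) :=
  PresentedGroup.toGroup (f := edgeOrOne Γ) <| by
    rintro r (hr | ⟨i, j, h, hna, rfl⟩)
    · exact lift_eq_one_of_mem_markoffRels _ hr
    · exact FreeGroup.lift_apply_of.trans (dif_neg hna)

theorem toFreeAbelian_gen_of_adj {i j : Fin n} (h : i < j) (hadj : Γ.Adj i j) :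
    toFreeAbelian Γ (gen Γ i j h) = .ofAdd (.of ⟨s(i, j), Γ.mem_edgeSet.mpr hadj⟩) :=
  (PresentedGroup.toGroup.of _).trans (dif_pos hadj)

theorem toFreeAbelian_gen_of_not_adj {i j : Fin n} (h : i < j) (hna : ¬Γ.Adj i j) :
    toFreeAbelian Γ (gen Γ i j h) = 1 :=
  (PresentedGroup.toGroup.of _).trans (dif_neg hna)

variable (Γ) in
def edgeGen (e : Γ.edgeSet) : chromPure Γ :=
  gen Γ e.1.inf e.1.sup (SimpleGraph.inf_lt_sup_of_mem_edgeSet e.2)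

theorem edgeGen_mk {i j : Fin n} (h : i < j) (hadj : Γ.Adj i j) :
    edgeGen Γ ⟨s(i, j), Γ.mem_edgeSet.mpr hadj⟩ = gen Γ i j h :=
  gen_congr _ _ (by simp [h.le]) (by simp [h.le])

theorem toFreeAbelian_edgeGen (e : Γ.edgeSet) :
    toFreeAbelian Γ (edgeGen Γ e) = .ofAdd (.of e) := by
  have hmk : s(e.1.inf, e.1.sup) = e.1 := Sym2.sortEquiv.symm_apply_apply e.1
  rw [edgeGen, toFreeAbelian_gen_of_adj _ (by rw [← Γ.mem_edgeSet, hmk]; exact e.2)]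
  exact congrArg (fun e => Multiplicative.ofAdd (FreeAbelianGroup.of e)) (Subtype.ext hmk)

variable (htri : ∀ i j k : Fin n, ¬(Γ.Adj i j ∧ Γ.Adj j k ∧ Γ.Adj i k))
include htri

theorem commute_gen_of_interleaved {i k j l : Fin n} (hik : i < k) (hkj : k < j) (hjl : j < l) :
    Commute (gen Γ i j (hik.trans hkj)) (gen Γ k l (hkj.trans hjl)) := by
  have hconj := commute_gen_conj (Γ := Γ) hik hkj hjl
  rwa [(commute_gens_of_not_triangle hkj hjl (htri k j l)).1.eq, mul_inv_cancel_right] at hconj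

theorem commute_gen {i j k l : Fin n} (hij : i < j) (hkl : k < l) :
    Commute (gen Γ i j hij) (gen Γ k l hkl) := by
  wlog hik : i ≤ k generalizing i j k l
  · exact (this hkl hij (le_of_not_ge hik)).symm
  rcases hik.lt_or_eq with hik | rfl
  · rcases lt_trichotomy j k with hjk | rfl | hkj
    · exact commute_gen_of_lt_of_lt hij hjk hkl
    · exact (commute_gens_of_not_triangle hij hkl (htri i j l)).2.1
    rcases lt_trichotomy j l with hjl | rfl | hlj
    · exact commute_gen_of_interleaved htri hik hkj hjl
    · exact (commute_gens_of_not_triangle hik hkj (htri i k j)).2.2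
    · exact commute_gen_of_nested hik hkl hlj
  · rcases lt_trichotomy j l with hjl | rfl | hlj
    · exact (commute_gens_of_not_triangle hij hjl (htri i j l)).1
    · rfl
    · exact (commute_gens_of_not_triangle hkl hlj (htri i l j)).1.symm

abbrev commGroup : CommGroup (chromPure Γ) where
  mul_comm := PresentedGroup.mul_comm_of_commute_of fun ⟨(_, _), hij⟩ ⟨(_, _), hkl⟩ =>
    commute_gen htri hij hkl

noncomputable def ofFreeAbelian : Multiplicative (FreeAbelianGroup Γ.edgeSet) →* chromPure Γ :=
  letI := commGroup htri
  AddMonoidHom.toMultiplicativeLeft (FreeAbelianGroup.lift fun e => .ofMul (edgeGen Γ e))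

theorem ofFreeAbelian_ofAdd_of (e : Γ.edgeSet) :
    ofFreeAbelian htri (.ofAdd (.of e)) = edgeGen Γ e :=
  letI := commGroup htri
  congrArg Additive.toMul (FreeAbelianGroup.lift_apply_of _ _)

theorem ofFreeAbelian_comp_toFreeAbelian :
    (ofFreeAbelian htri).comp (toFreeAbelian Γ) = MonoidHom.id _ := by
  refine PresentedGroup.ext ?_
  rintro ⟨⟨i, j⟩, h : i < j⟩
  change ofFreeAbelian htri (toFreeAbelian Γ (gen Γ i j h)) = gen Γ i j h
  by_cases hadj : Γ.Adj i j
  · rw [toFreeAbelian_gen_of_adj h hadj, ofFreeAbelian_ofAdd_of, edgeGen_mk h hadj]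
  · rw [toFreeAbelian_gen_of_not_adj h hadj, map_one, gen_eq_one_of_not_adj h hadj]

theorem toFreeAbelian_comp_ofFreeAbelian :
    (toFreeAbelian Γ).comp (ofFreeAbelian htri) = MonoidHom.id _ := by
  refine MonoidHom.toAdditive.injective (FreeAbelianGroup.lift_ext _ _ fun e => ?_)
  exact congrArg Additive.ofMul
    ((congrArg (toFreeAbelian Γ) (ofFreeAbelian_ofAdd_of htri e)).trans (toFreeAbelian_edgeGen e))

noncomputable def equivFreeAbelian :
    chromPure Γ ≃* Multiplicative (FreeAbelianGroup Γ.edgeSet) :=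
  (toFreeAbelian Γ).toMulEquiv (ofFreeAbelian htri) (ofFreeAbelian_comp_toFreeAbelian htri)
    (toFreeAbelian_comp_ofFreeAbelian htri)

end chromPure

open chromPure in
/-- If `Γ` contains no 3-circuit, then `P(Γ)` is a free abelian group on the edge set of
`Γ`, the isomorphism sending the class of `s_{i,j}` (for `{i,j} ∈ E(Γ)`) to the basis
element indexed by the edge `{i,j}`. -/
theorem stmt_15 {n : ℕ} (Γ : SimpleGraph (Fin n))
    (htri : ∀ i j k : Fin n, ¬(Γ.Adj i j ∧ Γ.Adj j k ∧ Γ.Adj i k)) :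
    ∃ φ : chromPure Γ ≃* Multiplicative (FreeAbelianGroup Γ.edgeSet),
      ∀ (i j : Fin n) (h : i < j) (he : Γ.Adj i j),
        φ (PresentedGroup.of ⟨(i, j), h⟩) =
          Multiplicative.ofAdd (FreeAbelianGroup.of ⟨s(i, j), Γ.mem_edgeSet.mpr he⟩) :=
  ⟨equivFreeAbelian htri, fun _ _ h he => toFreeAbelian_gen_of_adj h he⟩
end
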